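/- arXiv:1409.4132 — 2 statements merged into one kernel-verified Lean document; each statement's English description precedes it below -/
import Mathlib

section
/- In the lazy-voter model with lexicographic tie-breaking, the game admits a pure Nash equilibrium if and only if either all voters rank c_1 first, or there exists a candidate c_j with j > 1 such that (i) some voter ranks c_j first and (ii) every voter prefers c_j to every c_k with k < j. Moreover, such a candidate c_j, if it exists, is unique. -/
open Finset

/-- A ballot vector: each voter either abstains (`none`) or votes for a candidate. -/
abbrev Ballot (n m : ℕ) := Fin n → Option (Fin m)

/-- The plurality score of candidate `c` under ballot vector `b`. -/
def sc {n m : ℕ} (b : Ballot n m) (c : Fin m) : ℕ :=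
  (univ.filter fun i => b i = some c).card

/-- The maximum plurality score. -/
def maxScore {n m : ℕ} (b : Ballot n m) : ℕ :=
  univ.sup fun c : Fin m => sc b c

/-- The winning set `W(b)`: candidates with maximum score. -/
def winSet {n m : ℕ} (b : Ballot n m) : Finset (Fin m) :=
  univ.filter fun c => sc b c = maxScore b

/-- `H(b)`: candidates whose score is the maximum minus one. -/
def Hset {n m : ℕ} (b : Ballot n m) : Finset (Fin m) :=
  univ.filter fun c => sc b c + 1 = maxScore b

/-- `H'(b)`: candidates whose score is the maximum minus two. -/
def H'set {n m : ℕ} (b : Ballot n m) : Finset (Fin m) :=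
  univ.filter fun c => sc b c + 2 = maxScore b

/-- `c` is the winner under lexicographic tie-breaking: the minimum-index member of `W(b)`. -/
def IsLexWin {n m : ℕ} (b : Ballot n m) (c : Fin m) : Prop :=
  c ∈ winSet b ∧ ∀ c' ∈ winSet b, (c : ℕ) ≤ (c' : ℕ)

/-- The (degenerate) lottery induced by lexicographic tie-breaking. -/
def pLex {n m : ℕ} (b : Ballot n m) : Fin m → ℚ := fun c =>
  if c ∈ winSet b ∧ ∀ c' ∈ winSet b, (c : ℕ) ≤ (c' : ℕ) then 1 else 0

/-- The lottery induced by random-candidate tie-breaking: uniform over `W(b)`. -/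
def pRC {n m : ℕ} (b : Ballot n m) : Fin m → ℚ := fun c =>
  if c ∈ winSet b then ((winSet b).card : ℚ)⁻¹ else 0

/-- The lottery induced by random-voter tie-breaking: a uniformly random voter's
favourite member of `W(b)` is elected. -/
def pRV {n m : ℕ} (u : Fin n → Fin m → ℕ) (b : Ballot n m) : Fin m → ℚ := fun c =>
  ((univ.filter fun i : Fin n =>
      c ∈ winSet b ∧ ∀ c' ∈ winSet b, u i c' ≤ u i c).card : ℚ) / (n : ℚ)

/-- Expected utility of a lottery `p` for a voter with utility function `ui`. -/
def EU {m : ℕ} (ui : Fin m → ℕ) (p : Fin m → ℚ) : ℚ := ∑ c, p c * (ui c : ℚ)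

/-- Payoff of lazy voter `i`: expected utility plus a bonus `ε` for abstaining. -/
def lazyU {n m : ℕ} (p : Ballot n m → Fin m → ℚ) (u : Fin n → Fin m → ℕ)
    (ε : ℚ) (i : Fin n) (b : Ballot n m) : ℚ :=
  EU (u i) (p b) + if b i = none then ε else 0

/-- Pure Nash equilibrium of the lazy-voter game. -/
def lazyPNE {n m : ℕ} (p : Ballot n m → Fin m → ℚ) (u : Fin n → Fin m → ℕ)
    (ε : ℚ) (b : Ballot n m) : Prop :=
  ∀ (i : Fin n) (b' : Option (Fin m)),
    lazyU p u ε i (Function.update b i b') ≤ lazyU p u ε i b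

/-- View a non-abstaining (truth-biased) ballot vector as a general ballot vector. -/
def tv {n m : ℕ} (b : Fin n → Fin m) : Ballot n m := fun i => some (b i)

/-- Payoff of truth-biased voter `i`: expected utility plus a bonus `ε` for voting
truthfully (abstention, which would yield `-∞`, is never used). -/
def tbU {n m : ℕ} (p : Ballot n m → Fin m → ℚ) (u : Fin n → Fin m → ℕ)
    (a : Fin n → Fin m) (ε : ℚ) (i : Fin n) (b : Fin n → Fin m) : ℚ :=
  EU (u i) (p (tv b)) + if b i = a i then ε else 0

/-- Pure Nash equilibrium of the truth-biased game. -/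
def tbPNE {n m : ℕ} (p : Ballot n m → Fin m → ℚ) (u : Fin n → Fin m → ℕ)
    (a : Fin n → Fin m) (ε : ℚ) (b : Fin n → Fin m) : Prop :=
  ∀ (i : Fin n) (b' : Fin m),
    tbU p u a ε i (Function.update b i b') ≤ tbU p u a ε i b



section PNEHelpers

variable {n m : ℕ}

lemma sc_sum (b : Ballot n m) (c : Fin m) :
    sc b c = ∑ i, if b i = some c then 1 else 0 := by
  rw [sc, Finset.card_filter]

lemma sc_erase_eq (b : Ballot n m) (i : Fin n) (v : Option (Fin m)) (c : Fin m) :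
    ∑ x ∈ Finset.univ.erase i, (if Function.update b i v x = some c then 1 else 0) =
    ∑ x ∈ Finset.univ.erase i, (if b x = some c then 1 else 0) :=
  Finset.sum_congr rfl fun x hx => by
    rw [Function.update_of_ne (Finset.ne_of_mem_erase hx)]

lemma sc_update_none (b : Ballot n m) (i : Fin n) (c : Fin m) :
    sc b c = sc (Function.update b i none) c + (if b i = some c then 1 else 0) := by
  rw [sc_sum, sc_sum,
    ← Finset.add_sum_erase _ (fun x => if b x = some c then 1 else 0) (Finset.mem_univ i),
    ← Finset.add_sum_erase _
      (fun x => if Function.update b i none x = some c then 1 else 0) (Finset.mem_univ i),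
    sc_erase_eq]
  simp [add_comm]

lemma sc_update_some (b : Ballot n m) (i : Fin n) (hbi : b i = none) (x c : Fin m) :
    sc (Function.update b i (some x)) c = sc b c + (if x = c then 1 else 0) := by
  rw [sc_sum, sc_sum,
    ← Finset.add_sum_erase _ (fun y => if b y = some c then 1 else 0) (Finset.mem_univ i),
    ← Finset.add_sum_erase _
      (fun y => if Function.update b i (some x) y = some c then 1 else 0) (Finset.mem_univ i),
    sc_erase_eq]
  simp [hbi, add_comm, add_assoc, add_left_comm]

lemma sc_allNone {b : Ballot n m} (hb : ∀ i, b i = none) (c : Fin m) : sc b c = 0 := by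
  rw [sc, Finset.card_eq_zero, Finset.filter_eq_empty_iff]
  intro i _
  simp [hb i]

lemma lexWin_of {b : Ballot n m} {w : Fin m} (h1 : ∀ c, sc b c ≤ sc b w)
    (h2 : ∀ c, sc b c = sc b w → (w : ℕ) ≤ (c : ℕ)) : IsLexWin b w := by
  have hmax : maxScore b = sc b w :=
    le_antisymm (Finset.sup_le fun c _ => h1 c) (Finset.le_sup (Finset.mem_univ w))
  constructor
  · simp [winSet, hmax]
  · intro c hc
    simp only [winSet, Finset.mem_filter, Finset.mem_univ, true_and, hmax] at hc
    exact h2 c hc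

lemma lexWin_score_le {b : Ballot n m} {w : Fin m} (h : IsLexWin b w) (c : Fin m) :
    sc b c ≤ sc b w := by
  have hw : sc b w = maxScore b := by
    have := h.1; simp only [winSet, Finset.mem_filter, Finset.mem_univ, true_and] at this
    exact this
  rw [hw]; exact Finset.le_sup (Finset.mem_univ c)

lemma lexWin_min {b : Ballot n m} {w : Fin m} (h : IsLexWin b w) (c : Fin m)
    (hc : sc b c = sc b w) : (w : ℕ) ≤ (c : ℕ) := by
  have hw : sc b w = maxScore b := by
    have := h.1; simp only [winSet, Finset.mem_filter, Finset.mem_univ, true_and] at this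
    exact this
  exact h.2 c (by simp [winSet, hc, hw])

lemma lexWin_unique {b : Ballot n m} {w w' : Fin m} (h : IsLexWin b w) (h' : IsLexWin b w') :
    w = w' := by
  have h1 := h.2 w' h'.1
  have h2 := h'.2 w h.1
  exact Fin.ext (le_antisymm h1 h2)

lemma exists_lexWin (hm : 0 < m) (b : Ballot n m) : ∃ w, IsLexWin b w := by
  have : Nonempty (Fin m) := ⟨⟨0, hm⟩⟩
  obtain ⟨c, _, hc⟩ := Finset.exists_mem_eq_sup Finset.univ Finset.univ_nonempty (sc b)
  have hne : (winSet b).Nonempty := ⟨c, by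
    unfold winSet maxScore; exact Finset.mem_filter.mpr ⟨Finset.mem_univ _, hc.symm⟩⟩
  obtain ⟨w, hwmem, hwmin⟩ := Finset.exists_min_image (winSet b) (fun c => (c : ℕ)) hne
  exact ⟨w, hwmem, hwmin⟩

lemma EU_pLex {b : Ballot n m} {w : Fin m} (h : IsLexWin b w) (ui : Fin m → ℕ) :
    EU ui (pLex b) = (ui w : ℚ) := by
  have hp : ∀ c, pLex b c = if c = w then 1 else 0 := by
    intro c
    by_cases hc : c = w
    · subst hc
      have hcond : c ∈ winSet b ∧ ∀ c' ∈ winSet b, (c : ℕ) ≤ (c' : ℕ) := ⟨h.1, h.2⟩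
      simp only [pLex, if_pos hcond]
      simp
    · simp only [pLex]
      rw [if_neg fun hcon => hc (lexWin_unique ⟨hcon.1, hcon.2⟩ h), if_neg hc]
  simp only [EU]
  rw [Finset.sum_congr rfl fun c _ => by rw [hp c]]
  simp

lemma lazyU_eq (u : Fin n → Fin m → ℕ) (ε : ℚ) {b : Ballot n m} {w : Fin m}
    (h : IsLexWin b w) (i : Fin n) :
    lazyU pLex u ε i b = (u i w : ℚ) + if b i = none then ε else 0 := by
  simp only [lazyU, EU_pLex h]

lemma allNone_win (hm : 0 < m) {b : Ballot n m} (hb : ∀ i, b i = none) :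
    IsLexWin b ⟨0, hm⟩ :=
  lexWin_of (fun c => by simp [sc_allNone hb]) (fun c _ => Nat.zero_le _)

lemma lexWin_single {b : Ballot n m} {x : Fin m}
    (hsc : ∀ d, sc b d = if x = d then 1 else 0) : IsLexWin b x := by
  apply lexWin_of
  · intro d; rw [hsc d, hsc x, if_pos rfl]; split <;> omega
  · intro d hd
    rw [hsc d, hsc x, if_pos rfl] at hd
    by_cases h : x = d
    · exact h ▸ le_refl _
    · rw [if_neg h] at hd; omega

lemma nat_le_of_le_add {p q : ℕ} {ε : ℚ} (hε1 : ε < 1) (h : (p : ℚ) ≤ (q : ℚ) + ε) :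
    p ≤ q := by
  by_contra hlt
  push_neg at hlt
  have : ((q : ℚ) + 1) ≤ (p : ℚ) := by exact_mod_cast hlt
  linarith

end PNEHelpers

theorem stmt3 {n m : ℕ} (hn : 0 < n) (hm : 0 < m)
    (u : Fin n → Fin m → ℕ) (hu : ∀ i, Function.Injective (u i))
    (ε : ℚ) (hε0 : 0 < ε) (hε : ε < min ((m : ℚ)⁻¹) ((n : ℚ)⁻¹))
    (a : Fin n → Fin m) (ha : ∀ i c, u i c ≤ u i (a i)) :
    ((∃ b : Ballot n m, lazyPNE pLex u ε b) ↔
      ((∀ i, a i = ⟨0, hm⟩) ∨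
        ∃ j : Fin m, 0 < (j : ℕ) ∧ (∃ i, a i = j) ∧
          ∀ k : Fin m, (k : ℕ) < (j : ℕ) → ∀ i, u i k < u i j)) ∧
    (∀ j j' : Fin m,
      (0 < (j : ℕ) ∧ (∃ i, a i = j) ∧
        ∀ k : Fin m, (k : ℕ) < (j : ℕ) → ∀ i, u i k < u i j) →
      (0 < (j' : ℕ) ∧ (∃ i, a i = j') ∧
        ∀ k : Fin m, (k : ℕ) < (j' : ℕ) → ∀ i, u i k < u i j') →
      j = j') := by
  have hε1 : ε < 1 := by
    have h1m : (1 : ℚ) ≤ (m : ℚ) := by exact_mod_cast hm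
    have hinv : (m : ℚ)⁻¹ ≤ 1 := inv_le_one_of_one_le₀ h1m
    calc ε < min ((m : ℚ)⁻¹) ((n : ℚ)⁻¹) := hε
      _ ≤ (m : ℚ)⁻¹ := min_le_left _ _
      _ ≤ 1 := hinv
  refine ⟨⟨?_, ?_⟩, ?_⟩
  · -- forward direction
    rintro ⟨b, hb⟩
    obtain ⟨w, hw⟩ := exists_lexWin hm b
    have step1 : ∀ i c, b i = some c → c = w := by
      intro i c hic
      by_contra hcw
      have hneq : ¬ b i = some w := by
        rw [hic]; simp only [Option.some.injEq]; exact hcw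
      have h1 := sc_update_none b i w
      rw [if_neg hneq, add_zero] at h1
      have h2 := sc_update_none b i c
      rw [if_pos hic] at h2
      have hwin' : IsLexWin (Function.update b i none) w := by
        apply lexWin_of
        · intro d
          have hd := sc_update_none b i d
          have := lexWin_score_le hw d
          omega
        · intro d hd
          by_cases hdc : d = c
          · exfalso
            subst hdc
            have := lexWin_score_le hw d
            omega
          · have hneqd : ¬ b i = some d := by
              rw [hic]; simp only [Option.some.injEq]
              exact fun h => hdc h.symm
            have hd2 := sc_update_none b i d
            rw [if_neg hneqd, add_zero] at hd2
            exact lexWin_min hw d (by omega)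
      have key := hb i none
      rw [lazyU_eq u ε hwin' i, lazyU_eq u ε hw i, Function.update_self, if_pos rfl,
        hic] at key
      simp only [reduceCtorEq, if_false] at key
      linarith
    by_cases hall : ∀ i, b i = none
    · left
      have hw0 : w = ⟨0, hm⟩ := lexWin_unique hw (allNone_win hm hall)
      intro i
      have hsc : ∀ d, sc (Function.update b i (some (a i))) d
          = if a i = d then 1 else 0 := by
        intro d
        rw [sc_update_some b i (hall i), sc_allNone hall, zero_add]
      have hwin' := lexWin_single hsc
      have key := hb i (some (a i))
      rw [lazyU_eq u ε hwin' i, lazyU_eq u ε hw i, Function.update_self, hall i,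
        if_pos rfl] at key
      simp only [reduceCtorEq, if_false, if_true, ite_true, eq_self_iff_true, add_zero] at key
      have h1 : u i (a i) ≤ u i w := nat_le_of_le_add hε1 key
      have h2 : u i w ≤ u i (a i) := ha i w
      have h3 : u i (a i) = u i (⟨0, hm⟩ : Fin m) := by rw [← hw0]; omega
      exact hu i h3
    · right
      push_neg at hall
      obtain ⟨i0, hi0⟩ := hall
      obtain ⟨c0, hc0⟩ := Option.ne_none_iff_exists'.mp hi0
      have hbi0 : b i0 = some w := by rw [hc0, step1 i0 c0 hc0]
      have hsc0 : ∀ d, d ≠ w → sc b d = 0 := by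
        intro d hd
        rw [sc, Finset.card_eq_zero, Finset.filter_eq_empty_iff]
        intro i _
        exact fun h => hd (step1 i d h)
      have hwpos : 0 < (w : ℕ) := by
        by_contra h0
        push_neg at h0
        have hw0 : (w : ℕ) = 0 := Nat.le_zero.mp h0
        have hwin' : IsLexWin (Function.update b i0 none) w := by
          apply lexWin_of
          · intro d
            by_cases hd : d = w
            · subst hd; exact le_refl _
            · have hd2 := sc_update_none b i0 d
              have := hsc0 d hd
              omega
          · intro d _
            omega
        have key := hb i0 none
        rw [lazyU_eq u ε hwin' i0, lazyU_eq u ε hw i0, Function.update_self, if_pos rfl,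
          hbi0] at key
        simp only [reduceCtorEq, if_false, if_true, ite_true, eq_self_iff_true, add_zero] at key
        linarith
      have hscw1 : sc b w = 1 := by
        have hpos : 0 < sc b w := by
          rw [sc, Finset.card_pos]
          exact ⟨i0, by simp [hbi0]⟩
        by_contra hne
        have h2 : 2 ≤ sc b w := by omega
        have e1 := sc_update_none b i0 w
        rw [if_pos hbi0] at e1
        have hwin' : IsLexWin (Function.update b i0 none) w := by
          apply lexWin_of
          · intro d
            by_cases hd : d = w
            · subst hd; exact le_refl _
            · have hd2 := sc_update_none b i0 d
              have := hsc0 d hd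
              omega
          · intro d hd
            by_cases hd' : d = w
            · subst hd'; exact le_refl _
            · exfalso
              have hd2 := sc_update_none b i0 d
              have := hsc0 d hd'
              omega
        have key := hb i0 none
        rw [lazyU_eq u ε hwin' i0, lazyU_eq u ε hw i0, Function.update_self, if_pos rfl,
          hbi0] at key
        simp only [reduceCtorEq, if_false, if_true, ite_true, eq_self_iff_true, add_zero] at key
        linarith
      have hbonly : ∀ i, i ≠ i0 → b i = none := by
        intro i hi
        by_contra hbi
        obtain ⟨c, hc⟩ := Option.ne_none_iff_exists'.mp hbi
        have hcw : c = w := step1 i c hc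
        subst hcw
        have h2 : 1 < sc b c := by
          rw [sc, Finset.one_lt_card]
          exact ⟨i, by simp [hc], i0, by simp [hbi0], hi⟩
        omega
      have hb1none : ∀ d, sc (Function.update b i0 none) d = 0 := by
        intro d
        have hd2 := sc_update_none b i0 d
        by_cases hd : d = w
        · subst hd; rw [if_pos hbi0] at hd2; omega
        · have := hsc0 d hd
          omega
      have hallc : ∀ c, u i0 c ≤ u i0 w := by
        intro c
        have hupd : Function.update b i0 (some c)
            = Function.update (Function.update b i0 none) i0 (some c) :=
          (Function.update_idem _ _ _).symm
        have hsc' : ∀ d, sc (Function.update b i0 (some c)) d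
            = if c = d then 1 else 0 := by
          intro d
          rw [hupd, sc_update_some _ i0 (Function.update_self _ _ _) c d, hb1none d,
            zero_add]
        have hwin' := lexWin_single hsc'
        have key := hb i0 (some c)
        rw [lazyU_eq u ε hwin' i0, lazyU_eq u ε hw i0, Function.update_self, hbi0] at key
        simp only [reduceCtorEq, if_false, if_true, ite_true, eq_self_iff_true, add_zero] at key
        exact_mod_cast key
      refine ⟨w, hwpos, ⟨i0, hu i0 (le_antisymm (hallc (a i0)) (ha i0 w))⟩, ?_⟩
      intro k hk i
      have hkw : k ≠ w := by
        intro h; rw [h] at hk; omega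
      by_cases hii0 : i = i0
      · subst hii0
        exact lt_of_le_of_ne (hallc k) fun he => hkw (hu i he)
      · have hbnone := hbonly i hii0
        have hsc' := sc_update_some b i hbnone k
        have hwin' : IsLexWin (Function.update b i (some k)) k := by
          apply lexWin_of
          · intro d
            rw [hsc' d, hsc' k, hsc0 k hkw]
            by_cases hd : d = w
            · subst hd
              rw [if_neg hkw, hscw1, if_pos rfl]
            · rw [hsc0 d hd]
              split_ifs <;> omega
          · intro d hd
            rw [hsc' d, hsc' k, hsc0 k hkw, if_pos rfl] at hd
            by_cases hdk : k = d
            · exact hdk ▸ le_refl _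
            · by_cases hdw : d = w
              · subst hdw; exact Nat.le_of_lt hk
              · rw [hsc0 d hdw, if_neg hdk] at hd; omega
        have key := hb i (some k)
        rw [lazyU_eq u ε hwin' i, lazyU_eq u ε hw i, Function.update_self, hbnone,
          if_pos rfl] at key
        simp only [reduceCtorEq, if_false, if_true, ite_true, eq_self_iff_true, add_zero] at key
        have hle : u i k ≤ u i w := nat_le_of_le_add hε1 key
        exact lt_of_le_of_ne hle fun he => hkw (hu i he)
  · -- backward direction
    rintro (h0 | ⟨j, hjpos, ⟨i0, hai0⟩, hpref⟩)
    · refine ⟨fun _ => none, ?_⟩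
      have hwb : IsLexWin (fun _ => none : Ballot n m) ⟨0, hm⟩ :=
        allNone_win hm fun _ => rfl
      intro i b'
      cases b' with
      | none =>
          have hupd : Function.update (fun _ => none : Ballot n m) i none
              = fun _ => none := Function.update_eq_self i _
          rw [hupd]
      | some c =>
          have hsc : ∀ d, sc (Function.update (fun _ => none : Ballot n m) i (some c)) d
              = if c = d then 1 else 0 := by
            intro d
            rw [sc_update_some _ i rfl c d, sc_allNone (fun _ => rfl) d, zero_add]
          have hwin' := lexWin_single hsc
          rw [lazyU_eq u ε hwin' i, lazyU_eq u ε hwb i, Function.update_self]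
          simp only [reduceCtorEq, if_false, if_true, ite_true, eq_self_iff_true, add_zero]
          have h1 : u i c ≤ u i (⟨0, hm⟩ : Fin m) := by
            have := ha i c
            rw [h0 i] at this
            exact this
          have h2 : (u i c : ℚ) ≤ (u i (⟨0, hm⟩ : Fin m) : ℚ) := by exact_mod_cast h1
          linarith
    · refine ⟨Function.update (fun _ => none : Ballot n m) i0 (some j), ?_⟩
      set b := Function.update (fun _ => none : Ballot n m) i0 (some j) with hbdef
      have hbi0 : b i0 = some j := Function.update_self _ _ _
      have hbnone : ∀ i, i ≠ i0 → b i = none := fun i hi => Function.update_of_ne hi _ _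
      have hscb : ∀ d, sc b d = if j = d then 1 else 0 := by
        intro d
        rw [hbdef, sc_update_some _ i0 rfl j d, sc_allNone (fun _ => rfl) d, zero_add]
      have hwb : IsLexWin b j := lexWin_single hscb
      intro i b'
      by_cases hii0 : i = i0
      · subst hii0
        cases b' with
        | none =>
            have hupd : Function.update b i none = (fun _ => none : Ballot n m) := by
              rw [hbdef, Function.update_idem]
              exact Function.update_eq_self i _
            rw [hupd, lazyU_eq u ε (allNone_win hm fun _ => rfl) i,
              lazyU_eq u ε hwb i, hbi0]
            simp only [reduceCtorEq, if_false, if_true, ite_true, eq_self_iff_true, add_zero]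
            have h1 : u i (⟨0, hm⟩ : Fin m) < u i j := hpref ⟨0, hm⟩ hjpos i
            have h2 : (u i (⟨0, hm⟩ : Fin m) : ℚ) + 1 ≤ (u i j : ℚ) := by exact_mod_cast h1
            linarith
        | some c =>
            have hupd : Function.update b i (some c)
                = Function.update (fun _ => none : Ballot n m) i (some c) := by
              rw [hbdef, Function.update_idem]
            have hsc' : ∀ d, sc (Function.update b i (some c)) d
                = if c = d then 1 else 0 := by
              intro d
              rw [hupd, sc_update_some _ i rfl c d, sc_allNone (fun _ => rfl) d, zero_add]
            have hwin' := lexWin_single hsc'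
            rw [lazyU_eq u ε hwin' i, lazyU_eq u ε hwb i, Function.update_self, hbi0]
            simp only [reduceCtorEq, if_false, if_true, ite_true, eq_self_iff_true, add_zero]
            have h1 := ha i c
            rw [hai0] at h1
            exact_mod_cast h1
      · cases b' with
        | none =>
            have hupd : Function.update b i none = b := by
              funext x
              by_cases hx : x = i
              · subst hx; rw [Function.update_self, hbnone x hii0]
              · rw [Function.update_of_ne hx]
            rw [hupd]
        | some c =>
            have hsc2 : ∀ d, sc (Function.update b i (some c)) d
                = (if j = d then 1 else 0) + (if c = d then 1 else 0) := by
              intro d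
              rw [sc_update_some b i (hbnone i hii0) c d, hscb d]
            by_cases hcj : c = j
            · subst hcj
              have hw2 : IsLexWin (Function.update b i (some c)) c := by
                apply lexWin_of
                · intro d
                  rw [hsc2 d, hsc2 c, if_pos rfl]
                  split_ifs <;> omega
                · intro d hd
                  rw [hsc2 d, hsc2 c, if_pos rfl] at hd
                  by_cases hdj : c = d
                  · exact hdj ▸ le_refl _
                  · rw [if_neg hdj] at hd; omega
              rw [lazyU_eq u ε hw2 i, lazyU_eq u ε hwb i, Function.update_self,
                hbnone i hii0, if_pos rfl]
              simp only [reduceCtorEq, if_false, if_true, ite_true, eq_self_iff_true, add_zero]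
              linarith
            · have hjc : j ≠ c := fun h => hcj h.symm
              by_cases hlt : (c : ℕ) < (j : ℕ)
              · have hw2 : IsLexWin (Function.update b i (some c)) c := by
                  apply lexWin_of
                  · intro d
                    rw [hsc2 d, hsc2 c, if_neg hjc, if_pos rfl]
                    split_ifs <;> omega
                  · intro d hd
                    rw [hsc2 d, hsc2 c, if_neg hjc, if_pos rfl] at hd
                    by_cases hdc : c = d
                    · exact hdc ▸ le_refl _
                    · by_cases hdj : j = d
                      · subst hdj; exact Nat.le_of_lt hlt
                      · rw [if_neg hdj, if_neg hdc] at hd; omega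
                rw [lazyU_eq u ε hw2 i, lazyU_eq u ε hwb i, Function.update_self,
                  hbnone i hii0, if_pos rfl]
                simp only [reduceCtorEq, if_false, if_true, ite_true, eq_self_iff_true, add_zero]
                have h1 := hpref c hlt i
                have h2 : (u i c : ℚ) ≤ (u i j : ℚ) := by
                  exact_mod_cast Nat.le_of_lt h1
                linarith
              · have hjlt : (j : ℕ) < (c : ℕ) := by
                  have hne : (j : ℕ) ≠ (c : ℕ) := fun h => hjc (Fin.ext h)
                  omega
                have hw2 : IsLexWin (Function.update b i (some c)) j := by
                  apply lexWin_of
                  · intro d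
                    rw [hsc2 d, hsc2 j, if_pos rfl, if_neg hcj]
                    split_ifs <;> omega
                  · intro d hd
                    rw [hsc2 d, hsc2 j, if_pos rfl, if_neg hcj] at hd
                    by_cases hdj : j = d
                    · exact hdj ▸ le_refl _
                    · by_cases hdc : c = d
                      · subst hdc; exact Nat.le_of_lt hjlt
                      · rw [if_neg hdj, if_neg hdc] at hd; omega
                rw [lazyU_eq u ε hw2 i, lazyU_eq u ε hwb i, Function.update_self,
                  hbnone i hii0, if_pos rfl]
                simp only [reduceCtorEq, if_false, if_true, ite_true, eq_self_iff_true, add_zero]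
                linarith
  · -- uniqueness
    rintro j j' ⟨hj0, ⟨i, hi⟩, hjp⟩ ⟨hj0', ⟨i', hi'⟩, hjp'⟩
    rcases Nat.lt_trichotomy (j : ℕ) (j' : ℕ) with h | h | h
    · exfalso
      have h1 := hjp' j h i
      have h2 := ha i j'
      rw [hi] at h2
      omega
    · exact Fin.ext h
    · exfalso
      have h1 := hjp j' h i'
      have h2 := ha i' j
      rw [hi'] at h2
      omega
end

section
/- In the lazy-voter model with random candidate or random voter tie-breaking, if a ballot vector b is a PNE with W(b) = {c_j} a singleton, then all voters rank c_j first. -/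
open Finset

section AuxStmt6
variable {n m : ℕ}

lemma sc_update' (b : Ballot n m) (i : Fin n) (v : Option (Fin m)) (c : Fin m) :
    sc (Function.update b i v) c + (if b i = some c then 1 else 0)
      = sc b c + (if v = some c then 1 else 0) := by
  classical
  unfold sc
  rw [Finset.card_filter, Finset.card_filter,
    ← Finset.sum_erase_add _ _ (mem_univ i), ← Finset.sum_erase_add _ _ (mem_univ i)]
  have h : ∀ j ∈ univ.erase i,
      (if Function.update b i v j = some c then (1:ℕ) else 0) = (if b j = some c then 1 else 0) := by
    intro j hj; rw [Function.update_of_ne (Finset.ne_of_mem_erase hj)]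
  rw [Finset.sum_congr rfl h, Function.update_self]
  ring


lemma sc_update_le (b : Ballot n m) (i : Fin n) (c : Fin m) :
    sc (Function.update b i none) c ≤ sc b c := by
  have h := sc_update' b i none c
  rw [if_neg (by simp : ¬ (none : Option (Fin m)) = some c), add_zero] at h
  exact Nat.le.intro h

lemma sc_update_eq_of_ne (b : Ballot n m) (i : Fin n) (v : Option (Fin m)) (c : Fin m)
    (hbi : ¬ b i = some c) (hv : ¬ v = some c) :
    sc (Function.update b i v) c = sc b c := by
  have h := sc_update' b i v c
  rwa [if_neg hbi, if_neg hv, add_zero, add_zero] at h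

lemma sc_update_add (b : Ballot n m) (i : Fin n) (c : Fin m) (hbi : ¬ b i = some c) :
    sc (Function.update b i (some c)) c = sc b c + 1 := by
  have h := sc_update' b i (some c) c
  rwa [if_neg hbi, if_pos rfl, add_zero] at h

lemma sc_update_sub (b : Ballot n m) (i : Fin n) (v : Option (Fin m)) (c : Fin m)
    (hbi : b i = some c) (hv : ¬ v = some c) :
    sc (Function.update b i v) c + 1 = sc b c := by
  have h := sc_update' b i v c
  rwa [if_pos hbi, if_neg hv, add_zero] at h

lemma mem_winSet' (b : Ballot n m) (c : Fin m) :
    c ∈ winSet b ↔ sc b c = maxScore b := by simp [winSet]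

lemma maxScore_eq' (b : Ballot n m) (d : Fin m) (h : ∀ c, sc b c ≤ sc b d) :
    maxScore b = sc b d :=
  le_antisymm (Finset.sup_le fun c _ => h c) (Finset.le_sup (mem_univ d))

lemma winSet_singleton' (b : Ballot n m) (d : Fin m)
    (h : ∀ c, c ≠ d → sc b c < sc b d) : winSet b = {d} := by
  have hle : ∀ c, sc b c ≤ sc b d := by
    intro c; by_cases hc : c = d
    · subst hc; exact le_refl _
    · exact (h c hc).le
  have hmax := maxScore_eq' b d hle
  ext c
  simp only [mem_winSet', Finset.mem_singleton, hmax]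
  constructor
  · intro hc; by_contra hne; exact absurd hc (Nat.ne_of_lt (h c hne))
  · intro hc; subst hc; rfl

lemma winSet_pair' (b : Ballot n m) (d e : Fin m) (hde : d ≠ e)
    (heq : sc b e = sc b d) (h : ∀ c, c ≠ d → c ≠ e → sc b c < sc b d) :
    winSet b = {d, e} := by
  have hle : ∀ c, sc b c ≤ sc b d := by
    intro c
    by_cases hc : c = d; · subst hc; exact le_refl _
    by_cases hc' : c = e; · subst hc'; exact heq.le
    exact (h c hc hc').le
  have hmax := maxScore_eq' b d hle
  ext c
  simp only [mem_winSet', Finset.mem_insert, Finset.mem_singleton, hmax]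
  constructor
  · intro hc
    by_contra hne
    push_neg at hne
    exact absurd hc (Nat.ne_of_lt (h c hne.1 hne.2))
  · rintro (rfl | rfl)
    · rfl
    · exact heq

lemma EU_pRC_singleton' (b : Ballot n m) (d : Fin m) (hw : winSet b = {d})
    (ui : Fin m → ℕ) : EU ui (pRC b) = ui d := by
  unfold EU pRC
  rw [hw]
  simp [Finset.sum_ite_eq']

lemma EU_pRV_singleton' (hn : 0 < n) (u : Fin n → Fin m → ℕ) (b : Ballot n m)
    (d : Fin m) (hw : winSet b = {d}) (ui : Fin m → ℕ) : EU ui (pRV u b) = ui d := by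
  unfold EU pRV
  rw [hw]
  have hstep : ∀ c : Fin m,
      (((univ.filter fun i : Fin n =>
        c ∈ ({d} : Finset (Fin m)) ∧ ∀ c' ∈ ({d} : Finset (Fin m)), u i c' ≤ u i c).card : ℚ) / (n : ℚ))
      * (ui c : ℚ) = (if c = d then 1 else 0) * ui c := by
    intro c
    by_cases hc : c = d
    · subst hc
      simp [Finset.filter_true_of_mem, div_self (by positivity : (n:ℚ) ≠ 0)]
    · simp [hc]
  rw [Finset.sum_congr rfl fun c _ => hstep c]
  simp [Finset.sum_ite_eq']

lemma EU_pRC_pair' (b : Ballot n m) (d e : Fin m) (hde : d ≠ e)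
    (hw : winSet b = {d, e}) (ui : Fin m → ℕ) :
    EU ui (pRC b) = ((ui d : ℚ) + ui e) / 2 := by
  unfold EU pRC
  rw [hw, Finset.card_pair hde]
  have hstep : ∀ c : Fin m,
      (if c ∈ ({d, e} : Finset (Fin m)) then ((2:ℚ))⁻¹ else 0) * (ui c : ℚ)
      = if c ∈ ({d, e} : Finset (Fin m)) then ((2:ℚ))⁻¹ * ui c else 0 := by
    intro c; split <;> simp
  push_cast
  rw [Finset.sum_congr rfl fun c _ => hstep c, Finset.sum_ite_mem,
    Finset.univ_inter, Finset.sum_pair hde]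
  ring

lemma EU_pRV_pair' (u : Fin n → Fin m → ℕ) (b : Ballot n m)
    (d e : Fin m) (hde : d ≠ e) (hw : winSet b = {d, e}) (ui : Fin m → ℕ) :
    EU ui (pRV u b) =
      (((univ.filter fun i : Fin n => u i e ≤ u i d).card : ℚ) / n) * ui d
      + (((univ.filter fun i : Fin n => u i d ≤ u i e).card : ℚ) / n) * ui e := by
  unfold EU pRV
  rw [hw]
  have hstep : ∀ c : Fin m,
      (((univ.filter fun i : Fin n =>
        c ∈ ({d, e} : Finset (Fin m)) ∧ ∀ c' ∈ ({d, e} : Finset (Fin m)), u i c' ≤ u i c).card : ℚ) / (n : ℚ))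
      * (ui c : ℚ) =
      (if c = d then (((univ.filter fun i : Fin n => u i e ≤ u i d).card : ℚ) / n) * ui d
       else if c = e then (((univ.filter fun i : Fin n => u i d ≤ u i e).card : ℚ) / n) * ui e
       else 0) := by
    intro c
    by_cases hc : c = d
    · subst hc
      have : (univ.filter fun i : Fin n =>
          c ∈ ({c, e} : Finset (Fin m)) ∧ ∀ c' ∈ ({c, e} : Finset (Fin m)), u i c' ≤ u i c)
          = univ.filter fun i : Fin n => u i e ≤ u i c := by
        apply Finset.filter_congr
        intro i _
        simp [hde]
      rw [this, if_pos rfl]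
    · by_cases hc' : c = e
      · subst hc'
        have : (univ.filter fun i : Fin n =>
            c ∈ ({d, c} : Finset (Fin m)) ∧ ∀ c' ∈ ({d, c} : Finset (Fin m)), u i c' ≤ u i c)
            = univ.filter fun i : Fin n => u i d ≤ u i c := by
          apply Finset.filter_congr
          intro i _
          simp [hc]
        rw [this, if_neg hc, if_pos rfl]
      · simp [hc, hc']
  rw [Finset.sum_congr rfl fun c _ => hstep c]
  have hsplit : ∀ c : Fin m,
      (if c = d then (((univ.filter fun i : Fin n => u i e ≤ u i d).card : ℚ) / n) * ui d
       else if c = e then (((univ.filter fun i : Fin n => u i d ≤ u i e).card : ℚ) / n) * ui e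
       else 0)
      = (if c = d then (((univ.filter fun i : Fin n => u i e ≤ u i d).card : ℚ) / n) * ui d else 0)
        + (if c = e then (((univ.filter fun i : Fin n => u i d ≤ u i e).card : ℚ) / n) * ui e else 0) := by
    intro c
    by_cases hc : c = d
    · subst hc; rw [if_pos rfl, if_pos rfl, if_neg hde]; ring
    · by_cases hc' : c = e <;> simp [hc, hc', hde.symm]
  rw [Finset.sum_congr rfl fun c _ => hsplit c, Finset.sum_add_distrib,
    Finset.sum_ite_eq' univ d, Finset.sum_ite_eq' univ e]
  simp

end AuxStmt6

theorem stmt6 {n m : ℕ} (hn : 2 ≤ n) (hm : 0 < m)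
    (u : Fin n → Fin m → ℕ) (hu : ∀ i, Function.Injective (u i))
    (ε : ℚ) (hε0 : 0 < ε) (hε : ε < min ((m : ℚ)⁻¹) ((n : ℚ)⁻¹))
    (p : Ballot n m → Fin m → ℚ) (hp : p = pRC ∨ p = pRV u)
    (b : Ballot n m) (hb : lazyPNE p u ε b)
    (cj : Fin m) (hW : winSet b = {cj}) :
    ∀ (i : Fin n) (c : Fin m), u i c ≤ u i cj := by
  classical
  have hn0 : (0:ℚ) < n := by positivity
  have hn1 : 0 < n := by omega
  have p_congr : ∀ b1 b2 : Ballot n m, winSet b1 = winSet b2 → p b1 = p b2 := by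
    rcases hp with rfl | rfl
    · intro b1 b2 h; funext c; simp [pRC, h]
    · intro b1 b2 h; funext c; simp [pRV, h]
  have hcjW : sc b cj = maxScore b :=
    (mem_winSet' b cj).mp (hW ▸ Finset.mem_singleton_self cj)
  have hlt : ∀ c, c ≠ cj → sc b c < sc b cj := by
    intro c hc
    have h1 : sc b c ≤ maxScore b := Finset.le_sup (mem_univ c)
    have h2 : sc b c ≠ maxScore b := by
      intro h
      have : c ∈ winSet b := (mem_winSet' b c).mpr h
      rw [hW, Finset.mem_singleton] at this
      exact hc this
    rw [← hcjW] at h1 h2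
    exact lt_of_le_of_ne h1 h2
  have hdev : ∀ i' : Fin n, b i' ≠ none →
      winSet (Function.update b i' none) = {cj} → False := by
    intro i' hne hws
    have hpp : p (Function.update b i' none) = p b := p_congr _ _ (by rw [hws, hW])
    have h1 := hb i' none
    simp only [lazyU, hpp] at h1
    rw [if_pos (Function.update_self i' none b), if_neg hne] at h1
    linarith
  have hA : ∀ i', b i' ≠ none → b i' = some cj := by
    intro i' hne
    by_contra hc'
    obtain ⟨c', hc'eq⟩ := Option.ne_none_iff_exists'.mp hne
    have hc'cj : c' ≠ cj := by rintro rfl; exact hc' hc'eq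
    apply hdev i' hne
    apply winSet_singleton'
    intro c hccj
    have e1 : sc (Function.update b i' none) cj = sc b cj :=
      sc_update_eq_of_ne b i' none cj
        (by rw [hc'eq]; exact fun h => hc'cj (Option.some.inj h)) (by simp)
    have e2 := sc_update_le b i' c
    have := hlt c hccj
    omega
  have hzero : ∀ c, c ≠ cj → sc b c = 0 := by
    intro c hc
    unfold sc
    rw [Finset.card_eq_zero, Finset.filter_eq_empty_iff]
    intro j _ hj
    have hne : b j ≠ none := by rw [hj]; simp
    have := hA j hne
    rw [hj] at this
    exact hc (Option.some.inj this)
  have hk : sc b cj ≤ 1 := by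
    by_contra hk2
    push_neg at hk2
    have hpos : 0 < sc b cj := by omega
    obtain ⟨i', hi'⟩ := Finset.card_pos.mp hpos
    rw [Finset.mem_filter] at hi'
    have hbi' : b i' = some cj := hi'.2
    apply hdev i' (by rw [hbi']; simp)
    apply winSet_singleton'
    intro c hccj
    have e1 := sc_update_sub b i' none cj hbi' (by simp)
    have e2 := sc_update_le b i' c
    have := hzero c hccj
    omega
  intro i c
  by_contra hgoal
  push_neg at hgoal
  have hccj : c ≠ cj := by rintro rfl; exact lt_irrefl _ hgoal
  have huc1 : (u i cj : ℚ) + 1 ≤ u i c := by exact_mod_cast hgoal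
  have hεn : ε < (n:ℚ)⁻¹ := lt_of_lt_of_le hε (min_le_right _ _)
  have hn2 : (2:ℚ) ≤ n := by exact_mod_cast hn
  rcases Nat.le_one_iff_eq_zero_or_eq_one.mp hk with hsc | hsc
  · -- nobody votes: every candidate wins, so c ∈ {cj}, contradiction
    have hall : ∀ c', sc b c' ≤ sc b cj := by
      intro c'
      by_cases hc' : c' = cj
      · subst hc'; exact le_refl _
      · rw [hzero c' hc', hsc]
    have hmax := maxScore_eq' b cj hall
    have : c ∈ winSet b := by
      rw [mem_winSet', hmax, hsc, hzero c hccj]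
    rw [hW, Finset.mem_singleton] at this
    exact hccj this
  · obtain ⟨i0, hi0⟩ := Finset.card_eq_one.mp hsc
    have hbi0 : b i0 = some cj := by
      have : i0 ∈ univ.filter fun j => b j = some cj := by rw [hi0]; simp
      exact (Finset.mem_filter.mp this).2
    have hsomene : ∀ (x y : Fin m), x ≠ y → (some x : Option (Fin m)) ≠ some y :=
      fun x y hxy h => hxy (Option.some.inj h)
    by_cases hii0 : i = i0
    · -- the lone voter deviates to c and elects c outright
      subst hii0
      have e1 := sc_update_sub b i (some c) cj hbi0 (hsomene c cj hccj)
      have e2 := sc_update_add b i c (by rw [hbi0]; exact hsomene cj c (Ne.symm hccj))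
      have hws : winSet (Function.update b i (some c)) = {c} := by
        apply winSet_singleton'
        intro c'' hc''
        by_cases h2 : c'' = cj
        · subst h2; have := hzero c hccj; omega
        · have e3 := sc_update_eq_of_ne b i (some c) c''
            (by rw [hbi0]; exact hsomene cj c'' (Ne.symm h2))
            (hsomene c c'' (fun h => hc'' h.symm))
          have := hzero c'' h2
          have := hzero c hccj
          omega
      have hEU' : EU (u i) (p (Function.update b i (some c))) = u i c := by
        rcases hp with rfl | rfl
        · exact EU_pRC_singleton' _ c hws (u i)
        · exact EU_pRV_singleton' hn1 u _ c hws (u i)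
      have hEU : EU (u i) (p b) = u i cj := by
        rcases hp with rfl | rfl
        · exact EU_pRC_singleton' b cj hW (u i)
        · exact EU_pRV_singleton' hn1 u b cj hW (u i)
      have h1 := hb i (some c)
      simp only [lazyU, hEU, hEU'] at h1
      rw [if_neg (show Function.update b i (some c) i ≠ none by simp),
        if_neg (show b i ≠ none by rw [hbi0]; simp)] at h1
      have : u i c ≤ u i cj := by exact_mod_cast h1
      omega
    · -- an abstaining voter deviates to c, forcing a tie {cj, c}
      have hbi : b i = none := by
        by_contra hne
        have h2 := hA i hne
        have : i ∈ univ.filter fun j => b j = some cj := by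
          rw [Finset.mem_filter]; exact ⟨mem_univ i, h2⟩
        rw [hi0, Finset.mem_singleton] at this
        exact hii0 this
      have hbinone : ∀ d : Fin m, ¬ b i = some d := by
        intro d h; rw [hbi] at h; exact absurd h (by simp)
      have e1 := sc_update_eq_of_ne b i (some c) cj (hbinone cj) (hsomene c cj hccj)
      have e2 := sc_update_add b i c (hbinone c)
      have hws : winSet (Function.update b i (some c)) = {cj, c} := by
        apply winSet_pair' _ cj c (Ne.symm hccj)
        · have := hzero c hccj; omega
        · intro c'' h2 h3
          have e3 := sc_update_eq_of_ne b i (some c) c'' (hbinone c'')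
            (hsomene c c'' (fun h => h3 h.symm))
          have := hzero c'' h2
          omega
      have hEU : EU (u i) (p b) = u i cj := by
        rcases hp with rfl | rfl
        · exact EU_pRC_singleton' b cj hW (u i)
        · exact EU_pRV_singleton' hn1 u b cj hW (u i)
      have h1 := hb i (some c)
      simp only [lazyU, hEU] at h1
      rw [if_neg (show Function.update b i (some c) i ≠ none by simp),
        if_pos hbi, add_zero] at h1
      rcases hp with rfl | rfl
      · rw [EU_pRC_pair' _ cj c (Ne.symm hccj) hws (u i)] at h1
        have hinv : (n:ℚ)⁻¹ ≤ 2⁻¹ := by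
          apply inv_anti₀ (by norm_num) hn2
        linarith
      · rw [EU_pRV_pair' u _ cj c (Ne.symm hccj) hws (u i)] at h1
        set A := (univ.filter fun j : Fin n => u j cj ≤ u j c).card with hAdef
        set B := (univ.filter fun j : Fin n => u j c ≤ u j cj).card with hBdef
        have hAB : A + B = n := by
          have hBalt : (univ.filter fun j : Fin n => u j c ≤ u j cj)
              = univ.filter fun j : Fin n => ¬ u j cj ≤ u j c := by
            apply Finset.filter_congr
            intro j _
            have hne : u j c ≠ u j cj := fun h => hccj (hu j h)
            exact ⟨fun h h' => hne (le_antisymm h h'), fun h => le_of_not_ge h⟩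
          rw [hAdef, hBdef, hBalt, Finset.card_filter_add_card_filter_not,
            Finset.card_univ, Fintype.card_fin]
        have hA1 : 1 ≤ A :=
          Finset.card_pos.mpr ⟨i, Finset.mem_filter.mpr ⟨mem_univ i, hgoal.le⟩⟩
        have hA1' : (1:ℚ) ≤ A := by exact_mod_cast hA1
        have hABq : (A:ℚ) + B = n := by exact_mod_cast hAB
        have hεmul : ε * n < 1 := by
          calc ε * n < (n:ℚ)⁻¹ * n := mul_lt_mul_of_pos_right hεn hn0
            _ = 1 := inv_mul_cancel₀ (ne_of_gt hn0)
        have hmul : (n:ℚ) * ((B:ℚ)/n * u i cj + (A:ℚ)/n * u i c)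
            = (B:ℚ) * u i cj + (A:ℚ) * u i c := by
          field_simp
        have h2 : (B:ℚ) * u i cj + (A:ℚ) * u i c ≤ n * (↑(u i cj) + ε) := by
          rw [← hmul]
          exact mul_le_mul_of_nonneg_left h1 hn0.le
        nlinarith [mul_le_mul hA1' huc1 (by linarith) (by positivity : (0:ℚ) ≤ (A:ℚ))]
end
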